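/- For any commutative ring A, the map B(A) → A^× × A_{A^×} sending the matrix [[a,b],[0,a⁻¹]] to the pair (a, class of ab) is a surjective group homomorphism whose kernel is the commutator subgroup of B(A); hence B(A)^ab ≅ A^× ⊕ A_{A^×}. -/

import Mathlib

open Matrix

variable (A : Type*) [CommRing A]

/-- `B(A)`: the subgroup of `SL₂(A)` of matrices `[[a,b],[0,a⁻¹]]`, i.e. with vanishing
lower-left entry. -/
def BA : Subgroup (Matrix.SpecialLinearGroup (Fin 2) A) where
  carrier := {g | (g : Matrix (Fin 2) (Fin 2) A) 1 0 = 0}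
  one_mem' := by simp
  mul_mem' := by
    intro g h hg hh
    simp only [Set.mem_setOf_eq] at *
    show ((g : Matrix (Fin 2) (Fin 2) A) * (h : Matrix (Fin 2) (Fin 2) A)) 1 0 = 0
    rw [Matrix.mul_apply, Fin.sum_univ_two]
    simp [hg, hh]
  inv_mem' := by
    intro g hg
    simp only [Set.mem_setOf_eq] at *
    show (((g⁻¹ : Matrix.SpecialLinearGroup (Fin 2) A)) : Matrix (Fin 2) (Fin 2) A) 1 0 = 0
    rw [Matrix.SpecialLinearGroup.coe_inv, Matrix.adjugate_fin_two]
    simp [hg]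

/-- `T(A)`: the subgroup of `SL₂(A)` of diagonal matrices `diag(a, a⁻¹)`. -/
def TA : Subgroup (Matrix.SpecialLinearGroup (Fin 2) A) where
  carrier := {g | (g : Matrix (Fin 2) (Fin 2) A) 1 0 = 0 ∧
    (g : Matrix (Fin 2) (Fin 2) A) 0 1 = 0}
  one_mem' := by constructor <;> simp
  mul_mem' := by
    intro g h hg hh
    obtain ⟨hg1, hg2⟩ := hg
    obtain ⟨hh1, hh2⟩ := hh
    constructor <;>
    · show ((g : Matrix (Fin 2) (Fin 2) A) * (h : Matrix (Fin 2) (Fin 2) A)) _ _ = 0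
      rw [Matrix.mul_apply, Fin.sum_univ_two]
      simp [hg1, hg2, hh1, hh2]
  inv_mem' := by
    intro g hg
    obtain ⟨hg1, hg2⟩ := hg
    constructor <;>
    · show (((g⁻¹ : Matrix.SpecialLinearGroup (Fin 2) A)) : Matrix (Fin 2) (Fin 2) A) _ _ = 0
      rw [Matrix.SpecialLinearGroup.coe_inv, Matrix.adjugate_fin_two]
      simp [hg1, hg2]

lemma TA_le_BA : TA A ≤ BA A := fun _ hg => hg.1

/-- The additive subgroup of `A` generated by the elements `x(a²−1)`, `x ∈ A`, `a ∈ A^×`. -/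
def Asub : AddSubgroup A :=
  AddSubgroup.closure {z : A | ∃ (x : A) (a : Aˣ), z = x * ((a : A) ^ 2 - 1)}

/-!
Writing `a, b` for the upper row of `g ∈ B(A)`, the product rule
`(gh)₀₀ (gh)₀₁ = g₀₀ g₀₁ + a² h₀₀ h₀₁` shows that `g ↦ (a, ab)` is a homomorphism once `ab` is
read modulo the elements `x(a² - 1)`. Its kernel consists of the unipotent matrices `u(b)` with
`b ∈ Asub A`, and these are products of commutators because
`⁅diag(a, a⁻¹), u(x)⁆ = u(x(a² - 1))`; conversely the target is abelian, so it kills commutators.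
Surjectivity comes from `diag(a, a⁻¹) u(b) ↦ (a, b)`.
-/

namespace Asub

variable {A}

lemma mul_sq_sub_one_mem (x : A) (a : Aˣ) : x * ((a : A) ^ 2 - 1) ∈ Asub A :=
  AddSubgroup.subset_closure ⟨x, a, rfl⟩

lemma mk_sq_mul {a : A} (ha : IsUnit a) (x : A) :
    (QuotientAddGroup.mk (a ^ 2 * x) : A ⧸ Asub A) = QuotientAddGroup.mk x := by
  obtain ⟨u, rfl⟩ := ha
  rw [QuotientAddGroup.eq_iff_sub_mem]
  convert mul_sq_sub_one_mem x u using 1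
  ring

end Asub

namespace BA

variable {A}

def mat (g : BA A) : Matrix (Fin 2) (Fin 2) A :=
  ((g : SpecialLinearGroup (Fin 2) A) : Matrix (Fin 2) (Fin 2) A)

lemma mat_injective : Function.Injective (mat : BA A → Matrix (Fin 2) (Fin 2) A) :=
  fun _ _ h => Subtype.ext (Subtype.ext h)

lemma mat_one_zero (g : BA A) : mat g 1 0 = 0 := g.2

lemma mat_zero_zero_mul_mat_one_one (g : BA A) : mat g 0 0 * mat g 1 1 = 1 := by
  have h : (mat g).det = 1 := (g : SpecialLinearGroup (Fin 2) A).2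
  rwa [det_fin_two, mat_one_zero, mul_zero, sub_zero] at h

lemma isUnit_mat_zero_zero (g : BA A) : IsUnit (mat g 0 0) :=
  IsUnit.of_mul_eq_one _ (mat_zero_zero_mul_mat_one_one g)

lemma mat_mul (g h : BA A) : mat (g * h) = mat g * mat h := rfl

lemma mat_mul_zero_zero (g h : BA A) : mat (g * h) 0 0 = mat g 0 0 * mat h 0 0 := by
  simp [mat_mul, mul_apply, mat_one_zero]

lemma mat_mul_zero_one (g h : BA A) :
    mat (g * h) 0 1 = mat g 0 0 * mat h 0 1 + mat g 0 1 * mat h 1 1 := by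
  simp [mat_mul, mul_apply]

lemma mat_mul_zero_zero_mul_mat_mul_zero_one (g h : BA A) :
    mat (g * h) 0 0 * mat (g * h) 0 1 =
      mat g 0 0 * mat g 0 1 + mat g 0 0 ^ 2 * (mat h 0 0 * mat h 0 1) := by
  rw [mat_mul_zero_zero, mat_mul_zero_one]
  linear_combination (mat g 0 0 * mat g 0 1) * mat_zero_zero_mul_mat_one_one h

def diagonalUnitHom : BA A →* Aˣ :=
  MonoidHom.mk' (fun g => Units.mkOfMulEqOne _ _ (mat_zero_zero_mul_mat_one_one g))
    fun g h => Units.ext (mat_mul_zero_zero g h)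

def upperClassHom : BA A →* Multiplicative (A ⧸ Asub A) :=
  MonoidHom.mk' (fun g => Multiplicative.ofAdd (QuotientAddGroup.mk (mat g 0 0 * mat g 0 1)))
    fun g h => by
      rw [← ofAdd_add, mat_mul_zero_zero_mul_mat_mul_zero_one, QuotientAddGroup.mk_add,
        Asub.mk_sq_mul (isUnit_mat_zero_zero g)]

def toUnitsProdQuotient : BA A →* Aˣ × Multiplicative (A ⧸ Asub A) :=
  diagonalUnitHom.prod upperClassHom

def unipotent (b : A) : BA A :=
  ⟨⟨!![1, b; 0, 1], by simp [det_fin_two_of]⟩, rfl⟩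

def diagonalUnit (a : Aˣ) : BA A :=
  ⟨⟨!![(a : A), 0; 0, ((a⁻¹ : Aˣ) : A)], by simp [det_fin_two_of]⟩, rfl⟩

lemma mat_unipotent (b : A) : mat (unipotent b) = !![1, b; 0, 1] := rfl

lemma mat_diagonalUnit (a : Aˣ) :
    mat (diagonalUnit a) = !![(a : A), 0; 0, ((a⁻¹ : Aˣ) : A)] := rfl

lemma unipotent_add (x y : A) : unipotent (x + y) = unipotent x * unipotent y :=
  mat_injective <| by simp [mat_mul, mat_unipotent, add_comm]

lemma unipotent_zero : unipotent (0 : A) = 1 :=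
  mat_injective ((mat_unipotent 0).trans one_fin_two.symm)

lemma unipotent_neg (x : A) : unipotent (-x) = (unipotent x)⁻¹ :=
  eq_inv_of_mul_eq_one_left <| by rw [← unipotent_add, neg_add_cancel, unipotent_zero]

lemma diagonalUnit_mul_unipotent (a : Aˣ) (x : A) :
    diagonalUnit a * unipotent x = unipotent ((a : A) ^ 2 * x) * diagonalUnit a := by
  have hconj : (a : A) ^ 2 * x * ((a⁻¹ : Aˣ) : A) = a * x := by
    linear_combination ((a : A) * x) * a.mul_inv
  exact mat_injective (by simp [mat_mul, mat_unipotent, mat_diagonalUnit, hconj])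

open scoped commutatorElement in
lemma commutatorElement_diagonalUnit_unipotent (a : Aˣ) (x : A) :
    ⁅diagonalUnit a, unipotent x⁆ = unipotent (x * ((a : A) ^ 2 - 1)) := by
  rw [commutatorElement_def, diagonalUnit_mul_unipotent, mul_inv_cancel_right, ← unipotent_neg,
    ← unipotent_add]
  ring_nf

lemma unipotent_mem_commutator {b : A} (hb : b ∈ Asub A) : unipotent b ∈ commutator (BA A) := by
  induction hb using AddSubgroup.closure_induction with
  | mem _ hz =>
    obtain ⟨x, a, rfl⟩ := hz
    rw [← commutatorElement_diagonalUnit_unipotent]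
    exact Subgroup.commutator_mem_commutator trivial trivial
  | zero => rw [unipotent_zero]; exact one_mem _
  | add x y _ _ hx hy => rw [unipotent_add]; exact mul_mem hx hy
  | neg x _ hx => rw [unipotent_neg]; exact inv_mem hx

lemma eq_unipotent_of_mat_zero_zero {g : BA A} (hg : mat g 0 0 = 1) :
    g = unipotent (mat g 0 1) := by
  have hd : mat g 1 1 = 1 := by simpa [hg] using mat_zero_zero_mul_mat_one_one g
  refine mat_injective ((eta_fin_two (mat g)).trans ?_)
  rw [hg, hd, mat_one_zero]
  rfl

lemma toUnitsProdQuotient_diagonalUnit (a : Aˣ) :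
    toUnitsProdQuotient (diagonalUnit a) = (a, 1) := by
  ext
  · rfl
  · show QuotientAddGroup.mk _ = _
    simp [mat_diagonalUnit]

lemma toUnitsProdQuotient_unipotent (b : A) :
    toUnitsProdQuotient (unipotent b) = (1, Multiplicative.ofAdd (QuotientAddGroup.mk b)) := by
  ext
  · rfl
  · show QuotientAddGroup.mk _ = _
    simp [mat_unipotent]

lemma toUnitsProdQuotient_surjective : Function.Surjective (toUnitsProdQuotient (A := A)) := by
  rintro ⟨a, q⟩
  obtain ⟨b, hb⟩ := QuotientAddGroup.mk_surjective (Multiplicative.toAdd q)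
  refine ⟨diagonalUnit a * unipotent b, ?_⟩
  rw [map_mul, toUnitsProdQuotient_diagonalUnit, toUnitsProdQuotient_unipotent, hb]
  simp

lemma ker_toUnitsProdQuotient : (toUnitsProdQuotient (A := A)).ker = commutator (BA A) := by
  refine le_antisymm (fun g hg => ?_) (Abelianization.commutator_subset_ker _)
  obtain ⟨hu, hq⟩ := Prod.ext_iff.1 hg
  have ha : mat g 0 0 = 1 := congrArg Units.val hu
  have hb : mat g 0 1 ∈ Asub A := by
    rw [← QuotientAddGroup.eq_zero_iff, ← one_mul (mat g 0 1), ← ha]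
    exact congrArg Multiplicative.toAdd hq
  rw [eq_unipotent_of_mat_zero_zero ha]
  exact unipotent_mem_commutator hb

end BA

/-- The map `B(A) → A^× × A_{A^×}`, `[[a,b],[0,a⁻¹]] ↦ (a, ab)`, is a
surjective group homomorphism with kernel the commutator subgroup of `B(A)`; hence
`B(A)ᵃᵇ ≅ A^× ⊕ A_{A^×}`. -/
theorem BA_abelianization
    (A : Type*) [CommRing A] :
    ∃ f : ↥(BA A) →* Aˣ × Multiplicative (A ⧸ Asub A),
      (∀ g : ↥(BA A),
        (((f g).1 : A) = ((g : Matrix.SpecialLinearGroup (Fin 2) A) :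
            Matrix (Fin 2) (Fin 2) A) 0 0) ∧
        (f g).2 = Multiplicative.ofAdd (QuotientAddGroup.mk
          (((g : Matrix.SpecialLinearGroup (Fin 2) A) : Matrix (Fin 2) (Fin 2) A) 0 0 *
           ((g : Matrix.SpecialLinearGroup (Fin 2) A) : Matrix (Fin 2) (Fin 2) A) 0 1))) ∧
      Function.Surjective f ∧
      f.ker = commutator ↥(BA A) ∧
      Nonempty (Abelianization ↥(BA A) ≃* Aˣ × Multiplicative (A ⧸ Asub A)) :=
  ⟨BA.toUnitsProdQuotient, fun _ => ⟨rfl, rfl⟩, BA.toUnitsProdQuotient_surjective,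
    BA.ker_toUnitsProdQuotient,
    ⟨(QuotientGroup.quotientMulEquivOfEq BA.ker_toUnitsProdQuotient.symm).trans
      (QuotientGroup.quotientKerEquivOfSurjective _ BA.toUnitsProdQuotient_surjective)⟩⟩
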